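/- arXiv:2004.10329 — 2 statements merged into one kernel-verified Lean document; each statement's English description precedes it below -/
import Mathlib

section
/- Let M be an atomic Puiseux monoid. Then M is dense in ℝ≥0 if and only if 0 is a limit point of the set of atoms 𝒜(M). -/
/-!
Since `M` is atomic, its image in `ℝ` is the submonoid generated by the atoms. If the atoms
accumulate at `0`, the multiples `n • a` of an atom `a < ε` form an `ε`-net of `ℝ≥0`. If instead
every atom is at least `ε > 0`, then so is every nonzero element of `M`, and `(0, ε)` misses the
closure of `M`.
-/

open Set

/-- The image of a set of rationals in the reals. -/
def coeR (S : Set ℚ) : Set ℝ := (fun q : ℚ => (q : ℝ)) '' S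

/-- A Puiseux monoid: an additive submonoid of ℚ consisting of nonnegative rationals. -/
def IsPuiseux (M : AddSubmonoid ℚ) : Prop := ∀ x ∈ M, 0 ≤ x

/-- A set of reals is dense in ℝ≥0 if its closure contains all nonnegative reals. -/
def DenseInNonneg (S : Set ℝ) : Prop := Set.Ici (0 : ℝ) ⊆ closure S

/-- α is a limit point of S: every neighborhood of α meets S in a point other than α. -/
def IsLimitPt (α : ℝ) (S : Set ℝ) : Prop := α ∈ closure (S \ {α})

/-- The set of atoms (irreducibles) of an additive submonoid of ℚ. -/
def atoms (M : AddSubmonoid ℚ) : Set ℚ :=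
  {a : ℚ | a ∈ M ∧ a ≠ 0 ∧ ∀ u v : ℚ, u ∈ M → v ∈ M → a = u + v → u = 0 ∨ v = 0}

/-- M is atomic if it is generated by its set of atoms. -/
def IsAtomicMonoid (M : AddSubmonoid ℚ) : Prop := AddSubmonoid.closure (atoms M) = M

/-- S is somewhere dense in ℝ≥0: dense in some nonempty open interval (r,s) with 0 ≤ r. -/
def SomewhereDenseNonneg (S : Set ℝ) : Prop :=
  ∃ r s : ℝ, 0 ≤ r ∧ r < s ∧ Set.Ioo r s ⊆ closure (S ∩ Set.Ioo r s)

/-- S is nowhere dense in ℝ≥0: for all 0 ≤ r < s, S is not dense in (r,s). -/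
def NowhereDenseNonneg (S : Set ℝ) : Prop :=
  ∀ r s : ℝ, 0 ≤ r → r < s → ¬ (Set.Ioo r s ⊆ closure (S ∩ Set.Ioo r s))

/-- S is eventually dense: dense in (r, ∞) for some r ≥ 0. -/
def EventuallyDense (S : Set ℝ) : Prop :=
  ∃ r : ℝ, 0 ≤ r ∧ Set.Ioi r ⊆ closure (S ∩ Set.Ioi r)

/-- The difference group of M, realized as a subset of ℚ. -/
def gp (M : AddSubmonoid ℚ) : Set ℚ := {z : ℚ | ∃ x ∈ M, ∃ y ∈ M, z = x - y}

/-- The root closure of M. -/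
def rootClosure (M : AddSubmonoid ℚ) : Set ℚ :=
  {x ∈ gp M | ∃ n : ℕ, 0 < n ∧ (n : ℚ) * x ∈ M}

/-- The conductorSet of M. -/
def conductorSet (M : AddSubmonoid ℚ) : Set ℚ :=
  {x ∈ gp M | ∀ y ∈ rootClosure M, x + y ∈ M}

/-- M is finitely generated. -/
def IsFG (M : AddSubmonoid ℚ) : Prop :=
  ∃ F : Finset ℚ, AddSubmonoid.closure (F : Set ℚ) = M

/-- M is an increasing monoid: generated by a monotone nondecreasing sequence
of nonnegative rationals. -/
def IsIncreasing (M : AddSubmonoid ℚ) : Prop :=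
  ∃ a : ℕ → ℚ, Monotone a ∧ (∀ n, 0 ≤ a n) ∧ AddSubmonoid.closure (Set.range a) = M

/-- α is a limit point of S from the right. -/
def RightLimitPt (α : ℝ) (S : Set ℝ) : Prop :=
  ∀ ε : ℝ, 0 < ε → (Set.Ioo α (α + ε) ∩ S).Nonempty

theorem IsPuiseux.coeR_atoms_subset_Ioi {M : AddSubmonoid ℚ} (hM : IsPuiseux M) :
    coeR (atoms M) ⊆ Ioi 0 := by
  rintro _ ⟨a, ⟨haM, ha0, -⟩, rfl⟩
  exact (Rat.cast_pos (K := ℝ)).2 ((hM a haM).lt_of_ne' ha0)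

theorem IsAtomicMonoid.coeR_eq_closure {M : AddSubmonoid ℚ} (hA : IsAtomicMonoid M) :
    coeR (M : Set ℚ) = AddSubmonoid.closure (coeR (atoms M)) := by
  conv_lhs => rw [← hA]
  exact congrArg SetLike.coe (AddMonoidHom.map_mclosure (Rat.castHom ℝ : ℚ →+* ℝ) (atoms M))

theorem isLimitPt_zero_iff_of_subset_Ioi {S : Set ℝ} (hS : S ⊆ Ioi 0) :
    IsLimitPt 0 S ↔ ∀ ε > 0, ∃ a ∈ S, a < ε := by
  have hS0 : S \ {0} = S := sdiff_singleton_eq_self fun h => lt_irrefl (0 : ℝ) (hS h)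
  simp only [IsLimitPt, hS0, Metric.mem_closure_iff, Real.dist_eq, zero_sub, abs_neg]
  refine forall₂_congr fun ε _ => exists_congr fun a => and_congr_right fun ha => ?_
  rw [abs_of_pos (hS ha)]

theorem AddSubmonoid.eq_zero_or_le_of_mem_closure {α : Type*} [AddCommMonoid α] [PartialOrder α]
    [IsOrderedAddMonoid α] {A : Set α} {ε : α} (hε : 0 ≤ ε) (hA : ∀ a ∈ A, ε ≤ a) {x : α}
    (hx : x ∈ AddSubmonoid.closure A) : x = 0 ∨ ε ≤ x := by
  induction hx using AddSubmonoid.closure_induction with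
  | mem a ha => exact .inr (hA a ha)
  | zero => exact .inl rfl
  | add x y _ _ hx hy =>
    rcases hx with rfl | hx
    · rwa [zero_add]
    rcases hy with rfl | hy
    · rw [add_zero]; exact .inr hx
    exact .inr (le_add_of_le_of_nonneg hx (hε.trans hy))

theorem denseInNonneg_of_forall_exists_pos_lt (S : AddSubmonoid ℝ)
    (hS : ∀ ε > 0, ∃ a ∈ S, 0 < a ∧ a < ε) : DenseInNonneg S := by
  intro x (hx : 0 ≤ x)
  refine Metric.mem_closure_iff.2 fun ε hε => ?_
  obtain ⟨a, haS, ha0, haε⟩ := hS ε hε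
  set n := ⌊x / a⌋₊
  have hnx : n * a ≤ x := (le_div_iff₀ ha0).1 (Nat.floor_le (div_nonneg hx ha0.le))
  have hxn : x < (n + 1) * a := (div_lt_iff₀ ha0).1 (Nat.lt_floor_add_one _)
  refine ⟨n • a, S.nsmul_mem haS n, ?_⟩
  rw [nsmul_eq_mul, Real.dist_eq, abs_of_nonneg (sub_nonneg.2 hnx)]
  linarith

theorem not_denseInNonneg_of_subset_insert_Ici {S : Set ℝ} {ε : ℝ} (hε : 0 < ε)
    (hS : S ⊆ insert 0 (Ici ε)) : ¬ DenseInNonneg S := by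
  intro hD
  have hclosed : IsClosed (insert (0 : ℝ) (Ici ε)) := by
    rw [insert_eq]; exact isClosed_singleton.union isClosed_Ici
  have := closure_minimal hS hclosed (hD (show 0 ≤ ε / 2 by positivity))
  rcases this with h | h
  · linarith
  · linarith [mem_Ici.1 h]

/-- An atomic Puiseux monoid is dense in ℝ≥0 iff 0 is a limit point
of its set of atoms. -/
theorem stmt1 (M : AddSubmonoid ℚ) (hM : IsPuiseux M) (hA : IsAtomicMonoid M) :
    DenseInNonneg (coeR (M : Set ℚ)) ↔ IsLimitPt 0 (coeR (atoms M)) := by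
  have hpos := hM.coeR_atoms_subset_Ioi
  rw [hA.coeR_eq_closure, isLimitPt_zero_iff_of_subset_Ioi hpos]
  constructor
  · intro hD
    by_contra! ⟨ε, hε, hle⟩
    refine not_denseInNonneg_of_subset_insert_Ici hε (fun x hx => ?_) hD
    exact AddSubmonoid.eq_zero_or_le_of_mem_closure hε.le hle hx
  · intro hsmall
    refine denseInNonneg_of_forall_exists_pos_lt _ fun ε hε => ?_
    obtain ⟨a, ha, haε⟩ := hsmall ε hε
    exact ⟨a, AddSubmonoid.subset_closure ha, hpos ha, haε⟩
end

section
/- Let M be an increasing Puiseux monoid. Then the conductor 𝔠(M) = {x ∈ gp(M) | x + M̃ ⊆ M} is nonempty if and only if M is finitely generated. -/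
open Set

/-!
An increasing Puiseux monoid is well ordered, being the submonoid generated by a well-ordered
set of nonnegative rationals. If `c` lies in the conductor and `x₀` is the least element of `M`
above `c`, then `d = x₀ - c` is the least positive element of `gp M`: a smaller positive `g` would
put `c + g ∈ M` strictly between `c` and `x₀`. A finitely generated Puiseux monoid has bounded
denominators, so its difference group has a least positive element `d` as well.

Once `gp M = ℤd`, write `d = A - B` with `B = bd` and `A = (b + 1)d` in `M`; every `kd` with
`k ≥ b²` is a combination of `A` and `B`, so `b²d` is in the conductor. Conversely, a conductor
element `c` splits every `m > 2c + d` of `M` as `(c + d) + (m - c - d)` with both summands in `M`,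
so `M` is generated by its finitely many elements `≤ 2c + d`.
-/

def gpAddSubgroup (M : AddSubmonoid ℚ) : AddSubgroup ℚ where
  carrier := gp M
  add_mem' := by
    rintro _ _ ⟨x, hx, y, hy, rfl⟩ ⟨u, hu, v, hv, rfl⟩
    exact ⟨x + u, M.add_mem hx hu, y + v, M.add_mem hy hv, by ring⟩
  zero_mem' := ⟨0, M.zero_mem, 0, M.zero_mem, by ring⟩
  neg_mem' := by
    rintro _ ⟨x, hx, y, hy, rfl⟩
    exact ⟨y, hy, x, hx, by ring⟩

theorem Monotone.isPWO_range {α : Type*} [Preorder α] {f : ℕ → α} (hf : Monotone f) :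
    (range f).IsPWO := by
  simpa only [image_univ] using (isPWO_of_wellQuasiOrderedLE univ).image_of_monotone hf

theorem Nat.exists_mul_add_mul_succ_eq {b k : ℕ} (hk : b * b ≤ k) :
    ∃ s t : ℕ, s * b + t * (b + 1) = k := by
  rcases Nat.eq_zero_or_pos b with rfl | hb
  · exact ⟨0, k, by simp⟩
  have hmod : k % b ≤ k / b := (Nat.mod_lt k hb).le.trans ((Nat.le_div_iff_mul_le hb).2 hk)
  refine ⟨k / b - k % b, k % b, ?_⟩
  calc (k / b - k % b) * b + k % b * (b + 1) = (k / b - k % b + k % b) * b + k % b := by ring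
    _ = k := by rw [Nat.sub_add_cancel hmod, Nat.div_add_mod']

theorem AddSubmonoid.closure_inter_Iic_eq_of_isWF {α : Type*} [AddMonoid α] [LinearOrder α]
    {M : AddSubmonoid α} (hWF : (M : Set α).IsWF) (T : α)
    (hsplit : ∀ m ∈ M, T < m → ∃ x ∈ M, ∃ y ∈ M, x < m ∧ y < m ∧ x + y = m) :
    closure ((M : Set α) ∩ Iic T) = M := by
  refine le_antisymm (closure_le.2 inter_subset_left) fun m hm => ?_
  refine Set.WellFoundedOn.induction hWF hm fun m hm ih => ?_
  rcases le_or_gt m T with hmT | hTm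
  · exact subset_closure ⟨hm, hmT⟩
  · obtain ⟨x, hx, y, hy, hxm, hym, rfl⟩ := hsplit m hm hTm
    exact add_mem (ih x hx hxm) (ih y hy hym)

section

variable {M : AddSubmonoid ℚ}

theorem mem_gp_of_mem {m : ℚ} (hm : m ∈ M) : m ∈ gp M :=
  ⟨m, hm, 0, M.zero_mem, by ring⟩

theorem gpAddSubgroup_le {H : AddSubgroup ℚ} (h : M ≤ H.toAddSubmonoid) : gpAddSubgroup M ≤ H := by
  rintro _ ⟨x, hx, y, hy, rfl⟩
  exact H.sub_mem (h hx) (h hy)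

theorem zero_mem_rootClosure : (0 : ℚ) ∈ rootClosure M :=
  ⟨mem_gp_of_mem M.zero_mem, 1, one_pos, by simp⟩

theorem mem_rootClosure_of_nonneg {m₀ x : ℚ} (hm₀ : m₀ ∈ M) (h0 : 0 < m₀) (hx : x ∈ gp M)
    (hx0 : 0 ≤ x) : x ∈ rootClosure M := by
  set r := x / m₀
  have hr : 0 ≤ r.num := Rat.num_nonneg.2 (div_nonneg hx0 h0.le)
  refine ⟨hx, r.den, r.den_pos, ?_⟩
  have hnum : ((r.num.toNat : ℕ) : ℚ) = r.num := by exact_mod_cast Int.toNat_of_nonneg hr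
  have hrm : r * m₀ = x := div_mul_cancel₀ x h0.ne'
  have : (r.den : ℚ) * x = r.num.toNat • m₀ := by
    rw [nsmul_eq_mul, hnum, ← Rat.den_mul_eq_num, mul_assoc, hrm]
  rw [this]
  exact M.nsmul_mem hm₀ _

theorem IsPuiseux.nonneg_of_mem_rootClosure (hM : IsPuiseux M) {x : ℚ}
    (hx : x ∈ rootClosure M) : 0 ≤ x := by
  obtain ⟨-, n, hn, hnx⟩ := hx
  exact nonneg_of_mul_nonneg_right (hM _ hnx) (Nat.cast_pos.2 hn)

theorem mem_of_mem_conductorSet {c : ℚ} (hc : c ∈ conductorSet M) : c ∈ M := by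
  simpa using hc.2 0 zero_mem_rootClosure

theorem add_mem_of_mem_conductorSet {c m₀ x : ℚ} (hc : c ∈ conductorSet M) (hm₀ : m₀ ∈ M)
    (h0 : 0 < m₀) (hx : x ∈ gp M) (hx0 : 0 ≤ x) : c + x ∈ M :=
  hc.2 x (mem_rootClosure_of_nonneg hm₀ h0 hx hx0)

theorem IsPuiseux.eq_bot_or_exists_pos (hM : IsPuiseux M) : M = ⊥ ∨ ∃ m ∈ M, 0 < m := by
  refine or_iff_not_imp_right.2 fun h => (AddSubmonoid.eq_bot_iff_forall M).2 fun m hm => ?_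
  push Not at h
  exact le_antisymm (h m hm) (hM m hm)

theorem conductorSet_bot_nonempty : (conductorSet (⊥ : AddSubmonoid ℚ)).Nonempty := by
  refine ⟨0, mem_gp_of_mem (zero_mem _), ?_⟩
  rintro _ ⟨⟨x, hx, y, hy, rfl⟩, -⟩
  rw [AddSubmonoid.mem_bot] at hx hy
  simp [hx, hy]

theorem isFG_bot : IsFG (⊥ : AddSubmonoid ℚ) :=
  ⟨∅, by simp⟩

theorem IsIncreasing.isPuiseux (hM : IsIncreasing M) : IsPuiseux M := by
  obtain ⟨a, -, ha0, rfl⟩ := hM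
  intro m hm
  induction hm using AddSubmonoid.closure_induction with
  | mem x hx => obtain ⟨n, rfl⟩ := hx; exact ha0 n
  | zero => exact le_rfl
  | add x y _ _ hx hy => exact add_nonneg hx hy

theorem IsIncreasing.isWF (hM : IsIncreasing M) : (M : Set ℚ).IsWF := by
  obtain ⟨a, ha, ha0, rfl⟩ := hM
  exact (ha.isPWO_range.addSubmonoid_closure (by rintro _ ⟨n, rfl⟩; exact ha0 n)).isWF

theorem exists_nsmul_eq_of_isLeast {d x : ℚ} (hd : IsLeast {g ∈ gp M | 0 < g} d)
    (hx : x ∈ gp M) (hx0 : 0 ≤ x) : ∃ n : ℕ, n • d = x := by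
  have hxd : x ∈ AddSubgroup.zmultiples d := by
    rw [AddSubgroup.zmultiples_eq_closure, ← AddSubgroup.cyclic_of_min (H := gpAddSubgroup M) hd]
    exact hx
  obtain ⟨k, rfl⟩ := AddSubgroup.mem_zmultiples_iff.1 hxd
  rw [zsmul_eq_mul] at hx0
  lift k to ℕ using by exact_mod_cast nonneg_of_mul_nonneg_left hx0 hd.1.2
  exact ⟨k, natCast_zsmul d k⟩

theorem exists_isLeast_gp_of_mem_conductorSet (hWF : (M : Set ℚ).IsWF) {c m₀ : ℚ}
    (hc : c ∈ conductorSet M) (hm₀ : m₀ ∈ M) (h0 : 0 < m₀) :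
    ∃ d, IsLeast {g ∈ gp M | 0 < g} d := by
  have hcM := mem_of_mem_conductorSet hc
  have hWF' : ((M : Set ℚ) ∩ Ioi c).IsWF := hWF.mono inter_subset_left
  have hne : ((M : Set ℚ) ∩ Ioi c).Nonempty :=
    ⟨c + m₀, M.add_mem hcM hm₀, lt_add_of_pos_right c h0⟩
  obtain ⟨hx₀M, hcx₀⟩ := hWF'.min_mem hne
  refine ⟨hWF'.min hne - c, ⟨⟨_, hx₀M, c, hcM, rfl⟩, sub_pos.2 hcx₀⟩, ?_⟩
  rintro g ⟨hg, hg0⟩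
  have := hWF'.min_le hne
    ⟨add_mem_of_mem_conductorSet hc hm₀ h0 hg hg0.le, lt_add_of_pos_right c hg0⟩
  linarith

theorem exists_gpAddSubgroup_le_zmultiples_inv_of_isFG (hfg : IsFG M) :
    ∃ q : ℕ, 0 < q ∧ gpAddSubgroup M ≤ AddSubgroup.zmultiples (q : ℚ)⁻¹ := by
  obtain ⟨F, rfl⟩ := hfg
  have hq : 0 < ∏ f ∈ F, f.den := Finset.prod_pos fun f _ => f.den_pos
  refine ⟨_, hq, gpAddSubgroup_le ?_⟩
  rw [AddSubmonoid.closure_le]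
  intro f hf
  obtain ⟨r, hr⟩ := Finset.dvd_prod_of_mem Rat.den hf
  have hr0 : (r : ℚ) ≠ 0 := Nat.cast_ne_zero.2 (right_ne_zero_of_mul (hr ▸ hq.ne'))
  refine ⟨f.num * r, ?_⟩
  dsimp only
  rw [zsmul_eq_mul, hr]
  push_cast
  field_simp
  exact (Rat.den_mul_eq_num f).symm

theorem exists_isLeast_gp_of_isFG (hfg : IsFG M) {m₀ : ℚ} (hm₀ : m₀ ∈ M) (h0 : 0 < m₀) :
    ∃ d, IsLeast {g ∈ gp M | 0 < g} d := by
  obtain ⟨q, hq, hle⟩ := exists_gpAddSubgroup_le_zmultiples_inv_of_isFG hfg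
  have hq' : (0 : ℚ) < (q : ℚ)⁻¹ := inv_pos.2 (Nat.cast_pos.2 hq)
  refine AddSubgroup.exists_isLeast_pos (H := gpAddSubgroup M) ?_ hq' ?_
  · intro h
    exact h0.ne' ((AddSubgroup.mem_bot).1 (h ▸ mem_gp_of_mem hm₀))
  · rw [Set.disjoint_left]
    rintro _ hg ⟨hg0, hgq⟩
    obtain ⟨k, rfl⟩ := AddSubgroup.mem_zmultiples_iff.1 (hle hg)
    rw [zsmul_eq_mul] at hg0 hgq
    have hk0 : (0 : ℚ) < k := pos_of_mul_pos_left hg0 hq'.le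
    have hk1 : (k : ℚ) < 1 := (mul_lt_iff_lt_one_left hq').1 hgq
    have : (0 : ℤ) < k ∧ k < 1 := ⟨by exact_mod_cast hk0, by exact_mod_cast hk1⟩
    omega

theorem IsPuiseux.conductorSet_nonempty_of_isLeast (hM : IsPuiseux M) {d : ℚ}
    (hd : IsLeast {g ∈ gp M | 0 < g} d) : (conductorSet M).Nonempty := by
  obtain ⟨A, hA, B, hB, hAB⟩ := hd.1.1
  obtain ⟨b, rfl⟩ := exists_nsmul_eq_of_isLeast hd (mem_gp_of_mem hB) (hM B hB)
  have hA' : (b + 1) • d = A := by rw [add_nsmul, one_nsmul]; linarith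
  have hlarge : ∀ k, b * b ≤ k → k • d ∈ M := by
    intro k hk
    obtain ⟨s, t, rfl⟩ := Nat.exists_mul_add_mul_succ_eq hk
    rw [add_nsmul, mul_nsmul', mul_nsmul', hA']
    exact M.add_mem (M.nsmul_mem hB s) (M.nsmul_mem hA t)
  refine ⟨(b * b) • d, mem_gp_of_mem (hlarge _ le_rfl), fun y hy => ?_⟩
  obtain ⟨j, rfl⟩ := exists_nsmul_eq_of_isLeast hd hy.1 (hM.nonneg_of_mem_rootClosure hy)
  rw [← add_nsmul]
  exact hlarge _ (Nat.le_add_right _ _)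

theorem IsPuiseux.isFG_of_isLeast (hM : IsPuiseux M) {c d : ℚ}
    (hd : IsLeast {g ∈ gp M | 0 < g} d) (hc : c ∈ conductorSet M) : IsFG M := by
  obtain ⟨⟨A, hA, B, hB, hAB⟩, hd0⟩ := hd.1
  have hA0 : 0 < A := by linarith [hM B hB]
  have hcM := mem_of_mem_conductorSet hc
  have hcd : c + d ∈ M := add_mem_of_mem_conductorSet hc hA hA0 hd.1.1 hd0.le
  have hsub : (M : Set ℚ) ⊆ range (· • d : ℕ → ℚ) := fun m hm =>
    exists_nsmul_eq_of_isLeast hd (mem_gp_of_mem hm) (hM m hm)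
  have hWF : (M : Set ℚ).IsWF := ((nsmul_left_monotone hd0.le).isPWO_range.mono hsub).isWF
  have hfin : ((M : Set ℚ) ∩ Iic (2 * c + d)).Finite := by
    refine ((finite_Iic ⌊(2 * c + d) / d⌋₊).image (· • d)).subset ?_
    rintro _ ⟨hm, hmT⟩
    obtain ⟨n, rfl⟩ := hsub hm
    refine ⟨n, Nat.le_floor ?_, rfl⟩
    rw [le_div_iff₀ hd0]
    simpa [nsmul_eq_mul] using hmT
  refine ⟨hfin.toFinset, ?_⟩
  rw [hfin.coe_toFinset]
  refine AddSubmonoid.closure_inter_Iic_eq_of_isWF hWF _ fun m hm hTm => ?_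
  have hgp : m - (c + d) - c ∈ gp M := (gpAddSubgroup M).sub_mem
    ((gpAddSubgroup M).sub_mem (mem_gp_of_mem hm) (mem_gp_of_mem hcd)) (mem_gp_of_mem hcM)
  have hrest := add_mem_of_mem_conductorSet hc hA hA0 hgp (by linarith)
  rw [add_sub_cancel] at hrest
  exact ⟨c + d, hcd, _, hrest, by linarith [hM c hcM], by linarith [hM c hcM], by ring⟩

end

/-- An increasing Puiseux monoid has nonempty conductorSet iff it is
finitely generated. -/
theorem stmt19 (M : AddSubmonoid ℚ) (hM : IsIncreasing M) :
    (conductorSet M).Nonempty ↔ IsFG M := by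
  obtain rfl | ⟨m₀, hm₀, h0⟩ := hM.isPuiseux.eq_bot_or_exists_pos
  · exact iff_of_true conductorSet_bot_nonempty isFG_bot
  constructor
  · rintro ⟨c, hc⟩
    obtain ⟨d, hd⟩ := exists_isLeast_gp_of_mem_conductorSet hM.isWF hc hm₀ h0
    exact hM.isPuiseux.isFG_of_isLeast hd hc
  · intro hfg
    obtain ⟨d, hd⟩ := exists_isLeast_gp_of_isFG hfg hm₀ h0
    exact hM.isPuiseux.conductorSet_nonempty_of_isLeast hd
end
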